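/- Let E be a real Hilbert space and P a Borel probability measure on E with convex support K = supp(P) and ∫‖x‖^r dP < ∞. If G_{r,n} has a strict local minimum at a = (a_1,...,a_n) ∈ E^n, then a_i ∈ K for every i ∈ {1,...,n}. -/

import Mathlib

/-!
If some centre `a i` lay outside the closed convex set `K = supp P`, let `p` be its nearest point
in `K`. For every `x ∈ K` the angle at `p` between `a i` and `x` is obtuse, so moving `a i` a
little towards `p` brings it closer to every point of `K`. Since `P` is concentrated on `K`, this
does not increase the distortion, contradicting the strictness of the local minimum.
-/

open MeasureTheory

def measureSupport {E : Type*} [TopologicalSpace E] [MeasurableSpace E]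
    (P : Measure E) : Set E :=
  {x : E | ∀ U : Set E, IsOpen U → x ∈ U → 0 < P U}

open Filter Topology Set
open scoped RealInnerProductSpace

lemma measureSupport_eq_support {E : Type*} [TopologicalSpace E] [MeasurableSpace E]
    (P : Measure E) : measureSupport P = P.support := by
  rw [Measure.support_eq_forall_isOpen]
  exact Set.ext fun x => forall_congr' fun U => Imp.swap

section Hilbert

variable {F : Type*} [NormedAddCommGroup F] [InnerProductSpace ℝ F]

lemma norm_sub_add_smul_le_of_norm_sq_le_inner {x y v : F} (h : ‖v‖ ^ 2 ≤ ⟪x - y, v⟫)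
    {t : ℝ} (ht₀ : 0 ≤ t) (ht₁ : t ≤ 1) : ‖x - (y + t • v)‖ ≤ ‖x - y‖ := by
  have hsq : ‖x - (y + t • v)‖ ^ 2 ≤ ‖x - y‖ ^ 2 := by
    rw [← sub_sub, norm_sub_sq_real, real_inner_smul_right, norm_smul, Real.norm_eq_abs,
      abs_of_nonneg ht₀, mul_pow]
    have ht : t ^ 2 ≤ t := by nlinarith
    nlinarith [mul_le_mul_of_nonneg_right ht (sq_nonneg ‖v‖), mul_le_mul_of_nonneg_left h ht₀]
  exact (pow_le_pow_iff_left₀ (norm_nonneg _) (norm_nonneg _) two_ne_zero).1 hsq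

lemma exists_ne_zero_forall_norm_sq_le_inner_sub {K : Set F} (hne : K.Nonempty)
    (hc : IsComplete K) (hK : Convex ℝ K) {y : F} (hy : y ∉ K) :
    ∃ v ≠ 0, ∀ x ∈ K, ‖v‖ ^ 2 ≤ ⟪x - y, v⟫ := by
  obtain ⟨p, hp, hproj⟩ := exists_norm_eq_iInf_of_complete_convex hne hc hK y
  have hobtuse := (norm_eq_iInf_iff_real_inner_le_zero hK hp).1 hproj
  refine ⟨p - y, sub_ne_zero.2 fun h => hy (h ▸ hp), fun x hx => ?_⟩
  have hsplit : ⟪x - y, p - y⟫ = ‖p - y‖ ^ 2 - ⟪y - p, x - p⟫ := by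
    rw [show x - y = (x - p) + (p - y) by abel, inner_add_left, real_inner_self_eq_norm_sq,
      real_inner_comm, ← neg_sub p y, inner_neg_left]
    ring
  linarith [hobtuse x hx]

end Hilbert

section Distortion

lemma integrable_norm_sub_rpow {E : Type*} [NormedAddCommGroup E] [MeasurableSpace E]
    [BorelSpace E] [SecondCountableTopology E] {P : Measure E} [IsFiniteMeasure P] {r : ℝ}
    (hr : 0 < r) (hint : Integrable (fun x => ‖x‖ ^ r) P) (c : E) :
    Integrable (fun x => ‖x - c‖ ^ r) P := by
  have hp₀ : ENNReal.ofReal r ≠ 0 := by simpa using hr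
  have hr' : (ENNReal.ofReal r).toReal = r := ENNReal.toReal_ofReal hr.le
  have hmemLp : MemLp id (ENNReal.ofReal r) P :=
    (integrable_norm_rpow_iff aestronglyMeasurable_id hp₀ ENNReal.ofReal_ne_top).1
      (by simpa only [hr', id] using hint)
  simpa only [hr', Pi.sub_apply, id] using
    (integrable_norm_rpow_iff (by fun_prop) hp₀ ENNReal.ofReal_ne_top).2
      (hmemLp.sub (memLp_const c))

variable {E ι : Type*} [NormedAddCommGroup E] [MeasurableSpace E] {P : Measure E} {r : ℝ}

lemma integral_iInf_norm_sub_rpow_mono {a b : ι → E} (hr : 0 ≤ r)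
    (hf : Integrable (fun x => (⨅ i, ‖x - a i‖) ^ r) P)
    (hle : ∀ᵐ x ∂P, ∀ i, ‖x - b i‖ ≤ ‖x - a i‖) :
    ∫ x, (⨅ i, ‖x - b i‖) ^ r ∂P ≤ ∫ x, (⨅ i, ‖x - a i‖) ^ r ∂P := by
  have hnonneg : ∀ x, 0 ≤ ⨅ i, ‖x - b i‖ :=
    fun x => Real.iInf_nonneg fun i => norm_nonneg _
  refine integral_mono_of_nonneg (ae_of_all _ fun x => Real.rpow_nonneg (hnonneg x) r) hf ?_
  filter_upwards [hle] with x hx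
  exact Real.rpow_le_rpow (hnonneg x)
    (ciInf_mono ⟨0, by rintro _ ⟨i, rfl⟩; positivity⟩ hx) hr

lemma integrable_iInf_norm_sub_rpow [BorelSpace E] [SecondCountableTopology E]
    [IsFiniteMeasure P] [Countable ι] (hr : 0 < r)
    (hint : Integrable (fun x => ‖x‖ ^ r) P) (a : ι → E) :
    Integrable (fun x => (⨅ i, ‖x - a i‖) ^ r) P := by
  cases isEmpty_or_nonempty ι
  · simp [Real.zero_rpow hr.ne']
  obtain ⟨i⟩ := ‹Nonempty ι›
  have hdom := integrable_norm_sub_rpow hr hint (a i)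
  refine hdom.mono ?_ (ae_of_all _ fun x => ?_)
  · exact ((Measurable.iInf fun j => by fun_prop).pow_const r).aestronglyMeasurable
  · have hnonneg : 0 ≤ ⨅ j, ‖x - a j‖ := Real.iInf_nonneg fun j => norm_nonneg _
    rw [Real.norm_of_nonneg (Real.rpow_nonneg hnonneg r),
      Real.norm_of_nonneg (Real.rpow_nonneg (norm_nonneg _) r)]
    exact Real.rpow_le_rpow hnonneg (ciInf_le ⟨0, by rintro _ ⟨j, rfl⟩; positivity⟩ i) hr.le

end Distortion

lemma exists_update_add_smul_mem {ι F : Type*} [DecidableEq ι] [NormedAddCommGroup F]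
    [NormedSpace ℝ F] {a : ι → F} {U : Set (ι → F)} (hU : U ∈ 𝓝 a) (i : ι) (v : F) :
    ∃ t ∈ Ioc (0 : ℝ) 1, Function.update a i (a i + t • v) ∈ U := by
  have hcont : Continuous fun t : ℝ => Function.update a i (a i + t • v) := by fun_prop
  have hlim := hcont.tendsto' 0 a (by simp)
  exact (Filter.Eventually.and (Ioc_mem_nhdsGT zero_lt_one)
    ((hlim.mono_left nhdsWithin_le_nhds).eventually_mem hU)).exists

theorem strict_local_min_components_in_support_general
    {E : Type*} [NormedAddCommGroup E] [InnerProductSpace ℝ E] [CompleteSpace E]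
    [SecondCountableTopology E] [MeasurableSpace E] [BorelSpace E]
    (P : Measure E) [IsProbabilityMeasure P]
    (r : ℝ) (hr : 0 < r) (hint : Integrable (fun x => ‖x‖ ^ r) P)
    (hconv : Convex ℝ (measureSupport P))
    (n : ℕ) (a : Fin n → E)
    (hmin : ∃ U ∈ nhds a, ∀ b ∈ U, b ≠ a →
      (∫ x, (⨅ i, ‖x - a i‖) ^ r ∂P) < ∫ x, (⨅ i, ‖x - b i‖) ^ r ∂P) :
    ∀ i, a i ∈ measureSupport P := by
  obtain ⟨U, hU, hUmin⟩ := hmin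
  rw [measureSupport_eq_support] at hconv ⊢
  intro i
  by_contra hai
  obtain ⟨v, hv, hpull⟩ := exists_ne_zero_forall_norm_sq_le_inner_sub
    (Measure.nonempty_support (IsProbabilityMeasure.ne_zero P))
    Measure.isClosed_support.isComplete hconv hai
  obtain ⟨t, ⟨ht₀, ht₁⟩, hbU⟩ := exists_update_add_smul_mem hU i v
  set b := Function.update a i (a i + t • v)
  have hba : b ≠ a := by simp [b, ht₀.ne', hv]
  have hcloser : ∀ᵐ x ∂P, ∀ j, ‖x - b j‖ ≤ ‖x - a j‖ := by
    filter_upwards [Measure.support_mem_ae] with x hx j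
    rcases eq_or_ne j i with rfl | hji
    · simpa [b] using norm_sub_add_smul_le_of_norm_sq_le_inner (hpull x hx) ht₀.le ht₁
    · simp [b, hji]
  exact (hUmin b hbU hba).not_ge <| integral_iInf_norm_sub_rpow_mono hr.le
    (integrable_iInf_norm_sub_rpow hr hint a) hcloser

/-- Hilbert setting: if `supp(P)` is convex and the `L^r`-distortion has a strict
local minimum at `a`, then every component `a i` lies in `supp(P)`. -/
theorem strict_local_min_components_in_support
    {E : Type*} [NormedAddCommGroup E] [InnerProductSpace ℝ E] [CompleteSpace E]
    [SecondCountableTopology E] [MeasurableSpace E] [BorelSpace E]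
    (P : Measure E) [IsProbabilityMeasure P]
    (r : ℝ) (hr : 0 < r) (hint : Integrable (fun x => ‖x‖ ^ r) P)
    (hconv : Convex ℝ (measureSupport P))
    (n : ℕ) (hn : 0 < n) (a : Fin n → E)
    (hmin : ∃ U ∈ nhds a, ∀ b ∈ U, b ≠ a →
      (∫ x, (⨅ i, ‖x - a i‖) ^ r ∂P) < ∫ x, (⨅ i, ‖x - b i‖) ^ r ∂P) :
    ∀ i, a i ∈ measureSupport P :=
  strict_local_min_components_in_support_general P r hr hint hconv n a hmin
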